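/- arXiv:2307.12822 — 7 statements merged into one kernel-verified Lean document; each statement's English description precedes it below -/
import Mathlib

section
/- Let σ_c > 0, σ_z ≥ 0, let d, n be positive integers, fix ε with 0 ≤ ε < σ_c, and define g(σ) = (ε σ + √(σ_c² (σ − 1)² + σ_z² (d/n) σ²))² for σ ∈ ℝ. Then g attains its global minimum over ℝ at σ* = (σ_c² − ε σ_c σ_z √(d/n) / √(σ_c² + σ_z² (d/n) − ε²)) / (σ_c² + σ_z² (d/n)), i.e., g(σ*) ≤ g(σ) for all σ ∈ ℝ. -/
set_option maxHeartbeats 1000000 in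
lemma stmt4_aux (a b ε k : ℝ) (ha : 0 < a) (hb : 0 ≤ b) (hε0 : 0 ≤ ε)
    (hεa : ε ^ 2 < a) (hk0 : 0 ≤ k) (hk2 : k ^ 2 = a * b) (σstar σ : ℝ)
    (hσdef : σstar = (a - ε * k / Real.sqrt (a + b - ε ^ 2)) / (a + b)) :
    (ε * σstar + Real.sqrt (a * (σstar - 1) ^ 2 + b * σstar ^ 2)) ^ 2
      ≤ (ε * σ + Real.sqrt (a * (σ - 1) ^ 2 + b * σ ^ 2)) ^ 2 := by
  have hA : 0 < a + b := by linarith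
  have hs2 : 0 < a + b - ε ^ 2 := by linarith
  set s : ℝ := Real.sqrt (a + b - ε ^ 2) with hsdef
  have hs : 0 < s := Real.sqrt_pos.mpr hs2
  have hss : s ^ 2 = a + b - ε ^ 2 := Real.sq_sqrt hs2.le
  set c : ℝ := k / s with hcdef
  have hc0 : 0 ≤ c := div_nonneg hk0 hs.le
  have hσ2 : σstar = (a - ε * c) / (a + b) := by rw [hσdef, hcdef]; ring
  have h1 : (a + b) * σstar = a - ε * c := by
    rw [hσ2, mul_div_cancel₀ _ hA.ne']
  have hc2A : c ^ 2 * (a + b - ε ^ 2) = a * b := by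
    rw [← hss, hcdef, div_pow, div_mul_cancel₀ _ (by positivity : s ^ 2 ≠ 0), hk2]
  have hQ : a * (σstar - 1) ^ 2 + b * σstar ^ 2 = c ^ 2 := by
    have h2 : (a + b) ^ 2 * (a * (σstar - 1) ^ 2 + b * σstar ^ 2)
        = (a + b) ^ 2 * c ^ 2 := by
      linear_combination ((a + b) * ((a + b) * σstar - a - ε * c)) * h1
        - (a + b) * hc2A
    exact mul_left_cancel₀ (pow_ne_zero 2 hA.ne') h2
  -- nonnegativity at σstar
  have hposstar : 0 ≤ ε * σstar + c := by
    rcases le_or_gt 0 σstar with h | h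
    · positivity
    · have h3 : ε ^ 2 * σstar ^ 2 ≤ c ^ 2 := by
        nlinarith [mul_nonneg hb (sq_nonneg σstar),
          mul_nonneg (sub_nonneg.mpr hεa.le) (sq_nonneg (σstar - 1)),
          mul_nonneg (sq_nonneg ε) (by linarith : (0:ℝ) ≤ 1 - 2 * σstar)]
      have h4 : 0 ≤ c - ε * σstar := by nlinarith [mul_nonneg hε0 (by linarith : (0:ℝ) ≤ -σstar)]
      nlinarith [h3, h4, hc0]
  -- generic point
  set T : ℝ := Real.sqrt (a * (σ - 1) ^ 2 + b * σ ^ 2) with hTdef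
  have hT0 : 0 ≤ T := Real.sqrt_nonneg _
  have hT2 : T ^ 2 = a * (σ - 1) ^ 2 + b * σ ^ 2 := Real.sq_sqrt (by positivity)
  have hTR : T ^ 2 - (c - ε * (σ - σstar)) ^ 2 = (a + b - ε ^ 2) * (σ - σstar) ^ 2 := by
    linear_combination hT2 + hQ + (2 * (σ - σstar)) * h1
  have hle : ε * σstar + c ≤ ε * σ + T := by
    rcases le_or_gt (c - ε * (σ - σstar)) 0 with h | h
    · linarith
    · have hTgeR : c - ε * (σ - σstar) ≤ T := by
        nlinarith [hTR, hT0, h, mul_nonneg hs2.le (sq_nonneg (σ - σstar))]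
      linarith
  rw [hQ, Real.sqrt_sq hc0]
  exact pow_le_pow_left₀ hposstar hle 2

/-- For `0 ≤ ε < σ_c`, the robust-risk lower bound
`g(σ) = (ε σ + √(σ_c² (σ-1)² + σ_z² (d/n) σ²))²` attains its global minimum at the
optimal shrinkage factor `σ*` of Theorem 1. -/
theorem stmt4 (σc σz ε : ℝ) (d n : ℕ) (hσc : 0 < σc) (hσz : 0 ≤ σz)
    (hd : 0 < d) (hn : 0 < n) (hε0 : 0 ≤ ε) (hεc : ε < σc) :
    let g : ℝ → ℝ := fun σ =>
      (ε * σ + Real.sqrt (σc ^ 2 * (σ - 1) ^ 2 + σz ^ 2 * ((d : ℝ) / n) * σ ^ 2)) ^ 2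
    let σstar : ℝ :=
      (σc ^ 2 - ε * σc * σz * Real.sqrt ((d : ℝ) / n)
          / Real.sqrt (σc ^ 2 + σz ^ 2 * ((d : ℝ) / n) - ε ^ 2))
        / (σc ^ 2 + σz ^ 2 * ((d : ℝ) / n))
    ∀ σ : ℝ, g σstar ≤ g σ := by
  intro g σstar σ
  have hD : 0 < (d : ℝ) / n := by
    apply div_pos <;> exact_mod_cast ‹_›
  have hεa : ε ^ 2 < σc ^ 2 := by nlinarith
  have hk2 : (σc * σz * Real.sqrt ((d : ℝ) / n)) ^ 2
      = σc ^ 2 * (σz ^ 2 * ((d : ℝ) / n)) := by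
    rw [mul_pow, mul_pow, Real.sq_sqrt hD.le]; ring
  have hσdef : σstar = (σc ^ 2 - ε * (σc * σz * Real.sqrt ((d : ℝ) / n))
      / Real.sqrt (σc ^ 2 + σz ^ 2 * ((d : ℝ) / n) - ε ^ 2))
      / (σc ^ 2 + σz ^ 2 * ((d : ℝ) / n)) := by
    show (σc ^ 2 - ε * σc * σz * Real.sqrt ((d : ℝ) / n)
          / Real.sqrt (σc ^ 2 + σz ^ 2 * ((d : ℝ) / n) - ε ^ 2))
        / (σc ^ 2 + σz ^ 2 * ((d : ℝ) / n)) = _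
    ring
  exact stmt4_aux (σc ^ 2) (σz ^ 2 * ((d : ℝ) / n)) ε
    (σc * σz * Real.sqrt ((d : ℝ) / n)) (by positivity) (by positivity) hε0 hεa
    (by positivity) hk2 σstar σ hσdef
end

section
/- Let σ_c > 0, σ_z ≥ 0, let d, n be positive integers, and let ε ≥ σ_c. Then the function g(σ) = (ε σ + √(σ_c² (σ − 1)² + σ_z² (d/n) σ²))² is monotonically increasing on [0, ∞); in particular g(0) = σ_c², and g(0) ≤ g(σ) for all σ ≥ 0. -/
/-- For `ε ≥ σ_c`, the function `g(σ) = (ε σ + √(σ_c² (σ-1)² + σ_z² (d/n) σ²))²` is monotonically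
increasing on `[0, ∞)`; in particular `g(0) = σ_c²` and `g(0) ≤ g(σ)` for all `σ ≥ 0`. -/
theorem stmt5 (σc σz ε : ℝ) (d n : ℕ) (hσc : 0 < σc) (hσz : 0 ≤ σz)
    (hd : 0 < d) (hn : 0 < n) (hε : σc ≤ ε) :
    let g : ℝ → ℝ := fun σ =>
      (ε * σ + Real.sqrt (σc ^ 2 * (σ - 1) ^ 2 + σz ^ 2 * ((d : ℝ) / n) * σ ^ 2)) ^ 2
    MonotoneOn g (Set.Ici (0 : ℝ)) ∧ g 0 = σc ^ 2 ∧ ∀ σ : ℝ, 0 ≤ σ → g 0 ≤ g σ := by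
  intro g
  have hε0 : 0 < ε := lt_of_lt_of_le hσc hε
  have hk : (0:ℝ) ≤ σz ^ 2 * ((d : ℝ) / n) := by positivity
  have hA : ∀ σ : ℝ, 0 ≤ σc ^ 2 * (σ - 1) ^ 2 + σz ^ 2 * ((d : ℝ) / n) * σ ^ 2 :=
    fun σ => by positivity
  have hs : ∀ σ : ℝ, σc * (1 - σ) ≤
      Real.sqrt (σc ^ 2 * (σ - 1) ^ 2 + σz ^ 2 * ((d : ℝ) / n) * σ ^ 2) := by
    intro σ
    rcases le_or_gt (σc * (1 - σ)) 0 with h | h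
    · exact h.trans (Real.sqrt_nonneg _)
    · rw [show σc * (1 - σ) = Real.sqrt ((σc * (1 - σ)) ^ 2) from (Real.sqrt_sq h.le).symm]
      apply Real.sqrt_le_sqrt
      nlinarith [mul_nonneg hk (sq_nonneg σ)]
  have hmono : ∀ a b : ℝ, 0 ≤ a → a ≤ b →
      ε * a + Real.sqrt (σc ^ 2 * (a - 1) ^ 2 + σz ^ 2 * ((d : ℝ) / n) * a ^ 2) ≤
      ε * b + Real.sqrt (σc ^ 2 * (b - 1) ^ 2 + σz ^ 2 * ((d : ℝ) / n) * b ^ 2) := by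
    intro a b ha hab
    set s := Real.sqrt (σc ^ 2 * (b - 1) ^ 2 + σz ^ 2 * ((d : ℝ) / n) * b ^ 2) with hsdef
    have hs0 : 0 ≤ s := Real.sqrt_nonneg _
    have hsb : σc * (1 - b) ≤ s := hs b
    have hsq : s ^ 2 = σc ^ 2 * (b - 1) ^ 2 + σz ^ 2 * ((d : ℝ) / n) * b ^ 2 :=
      Real.sq_sqrt (hA b)
    have h1 : 0 ≤ ε * (b - a) + s := by
      have : 0 ≤ ε * (b - a) := mul_nonneg hε0.le (by linarith)
      linarith
    have key : Real.sqrt (σc ^ 2 * (a - 1) ^ 2 + σz ^ 2 * ((d : ℝ) / n) * a ^ 2) ≤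
        ε * (b - a) + s := by
      rw [← Real.sqrt_sq h1]
      apply Real.sqrt_le_sqrt
      nlinarith [mul_nonneg (sub_nonneg.2 hab) (sub_nonneg.2 hsb),
        mul_nonneg (mul_nonneg hk (by linarith : (0:ℝ) ≤ a + b)) (sub_nonneg.2 hab),
        mul_nonneg (sub_nonneg.2 hε) hs0,
        mul_nonneg (sub_nonneg.2 hε) (sub_nonneg.2 hab),
        sq_nonneg (b - a), mul_nonneg (mul_nonneg (sub_nonneg.2 hε) hε0.le) (sq_nonneg (b - a)),
        mul_nonneg (mul_nonneg hσc.le (sub_nonneg.2 hab)) (sub_nonneg.2 hsb),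
        mul_nonneg (mul_nonneg (sub_nonneg.2 hε) (sub_nonneg.2 hab)) hs0]
    linarith
  have hpos : ∀ a : ℝ, 0 ≤ a →
      0 ≤ ε * a + Real.sqrt (σc ^ 2 * (a - 1) ^ 2 + σz ^ 2 * ((d : ℝ) / n) * a ^ 2) := by
    intro a ha
    have : 0 ≤ ε * a := mul_nonneg hε0.le ha
    have := Real.sqrt_nonneg (σc ^ 2 * (a - 1) ^ 2 + σz ^ 2 * ((d : ℝ) / n) * a ^ 2)
    linarith
  have hgm : MonotoneOn g (Set.Ici (0 : ℝ)) := by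
    intro a ha b hb hab
    exact pow_le_pow_left₀ (hpos a ha) (hmono a b ha hab) 2
  have hg0 : g 0 = σc ^ 2 := by
    show (ε * 0 + Real.sqrt (σc ^ 2 * ((0:ℝ) - 1) ^ 2 + σz ^ 2 * ((d : ℝ) / n) * (0:ℝ) ^ 2)) ^ 2
        = σc ^ 2
    have : σc ^ 2 * ((0:ℝ) - 1) ^ 2 + σz ^ 2 * ((d : ℝ) / n) * (0:ℝ) ^ 2 = σc ^ 2 := by ring
    rw [this, Real.sqrt_sq hσc.le]
    ring
  exact ⟨hgm, hg0, fun σ hσ => hgm (Set.mem_Ici.2 le_rfl) (Set.mem_Ici.2 hσ) hσ⟩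
end

section
/- Let σ_c > 0, σ_z > 0 and let d, n be positive integers. For 0 ≤ ε < σ_c define α(ε) = (σ_c² − ε σ_c σ_z √(d/n) / √(σ_c² + σ_z² (d/n) − ε²)) / (σ_c² + σ_z² (d/n)). Then (α(ε) − 1)² σ_c² + α(ε)² σ_z² (d/n) = σ_c² · σ_z² (d/n) / (σ_c² + σ_z² (d/n) − ε²), and the right-hand side is a strictly monotonically increasing function of ε on [0, σ_c). -/
/-!
Write `T = σ_c² + k` with `k = σ_z² (d/n)` and `α = (σ_c² - t)/T`. Expanding, the risk of `α U Uᵀ`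
is `(σ_c² k + t²)/T` for every `t`; the robust choice of `t` has `t² = ε² σ_c² k / (T - ε²)`,
which collapses the risk to `σ_c² k / (T - ε²)`. This is increasing in `ε` because its
denominator decreases and stays positive while `ε < σ_c`.
-/

open Set

theorem shrinkage_risk_eq (c k t : ℝ) (hT : c ^ 2 + k ≠ 0) :
    ((c ^ 2 - t) / (c ^ 2 + k) - 1) ^ 2 * c ^ 2 + ((c ^ 2 - t) / (c ^ 2 + k)) ^ 2 * k
      = (c ^ 2 * k + t ^ 2) / (c ^ 2 + k) := by
  field_simp
  ring

theorem robust_shrinkage_risk_eq (c z q ε : ℝ) (hq : 0 ≤ q) (hT : c ^ 2 + z ^ 2 * q ≠ 0)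
    (hD : 0 < c ^ 2 + z ^ 2 * q - ε ^ 2) :
    ((c ^ 2 - ε * c * z * √q / √(c ^ 2 + z ^ 2 * q - ε ^ 2)) / (c ^ 2 + z ^ 2 * q) - 1) ^ 2
          * c ^ 2
        + ((c ^ 2 - ε * c * z * √q / √(c ^ 2 + z ^ 2 * q - ε ^ 2)) / (c ^ 2 + z ^ 2 * q)) ^ 2
          * z ^ 2 * q
      = c ^ 2 * z ^ 2 * q / (c ^ 2 + z ^ 2 * q - ε ^ 2) := by
  have ht : (ε * c * z * √q / √(c ^ 2 + z ^ 2 * q - ε ^ 2)) ^ 2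
      = ε ^ 2 * c ^ 2 * (z ^ 2 * q) / (c ^ 2 + z ^ 2 * q - ε ^ 2) := by
    rw [div_pow, mul_pow, Real.sq_sqrt hq, Real.sq_sqrt hD.le]
    ring
  rw [mul_assoc _ (z ^ 2) q, shrinkage_risk_eq _ _ _ hT, ht]
  field_simp
  ring

theorem strictMonoOn_div_sub_sq {C T s : ℝ} (hC : 0 < C) (hs : s ^ 2 ≤ T) :
    StrictMonoOn (fun ε : ℝ => C / (T - ε ^ 2)) (Ico 0 s) := by
  rintro a ⟨ha0, -⟩ b ⟨-, hbs⟩ hab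
  have hb_pos : 0 < T - b ^ 2 := by nlinarith
  have hab_sq : T - b ^ 2 < T - a ^ 2 := by nlinarith
  exact div_lt_div_of_pos_left hC hb_pos hab_sq

/-- The robustness–accuracy trade-off: the standard risk of the optimal ε-robust denoiser equals
`σ_c² σ_z² (d/n) / (σ_c² + σ_z² (d/n) - ε²)`, which is strictly increasing in `ε` on `[0, σ_c)`. -/
theorem stmt12 (σc σz : ℝ) (d n : ℕ) (hσc : 0 < σc) (hσz : 0 < σz) (hd : 0 < d) (hn : 0 < n) :
    (∀ ε : ℝ, 0 ≤ ε → ε < σc →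
      (((σc ^ 2 - ε * σc * σz * Real.sqrt ((d : ℝ) / n)
            / Real.sqrt (σc ^ 2 + σz ^ 2 * ((d : ℝ) / n) - ε ^ 2))
          / (σc ^ 2 + σz ^ 2 * ((d : ℝ) / n)) - 1) ^ 2 * σc ^ 2
        + ((σc ^ 2 - ε * σc * σz * Real.sqrt ((d : ℝ) / n)
            / Real.sqrt (σc ^ 2 + σz ^ 2 * ((d : ℝ) / n) - ε ^ 2))
          / (σc ^ 2 + σz ^ 2 * ((d : ℝ) / n))) ^ 2 * σz ^ 2 * ((d : ℝ) / n)
        = σc ^ 2 * σz ^ 2 * ((d : ℝ) / n) / (σc ^ 2 + σz ^ 2 * ((d : ℝ) / n) - ε ^ 2))) ∧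
    StrictMonoOn
      (fun ε : ℝ => σc ^ 2 * σz ^ 2 * ((d : ℝ) / n) / (σc ^ 2 + σz ^ 2 * ((d : ℝ) / n) - ε ^ 2))
      (Set.Ico 0 σc) := by
  have hq : 0 < (d : ℝ) / n := by positivity
  have hk : 0 < σz ^ 2 * ((d : ℝ) / n) := by positivity
  refine ⟨fun ε hε0 hεc => ?_, strictMonoOn_div_sub_sq (by positivity) (by linarith)⟩
  refine robust_shrinkage_risk_eq _ _ _ _ hq.le (by positivity) ?_
  nlinarith
end

section
/- Let A ∈ ℝ^{m×n}, let U ∈ ℝ^{n×d} have orthonormal columns, let σ_c > 0, σ_z ≥ 0, σ_w ≥ 0 with σ_w² + σ_z²/m > 0. Define X = (σ_c²/d) A U (A U)ᵀ + (σ_w² + σ_z²/m) I_m and Y = (σ_c²/d) A U Uᵀ. Then X is positive definite (hence invertible), and the estimator H* = Yᵀ X⁻¹ minimizes the jittering risk J_{σ_w}(H) = (σ_c²/d) tr((H A − I) U Uᵀ (H A − I)ᵀ) + (σ_z²/m + σ_w²) tr(H Hᵀ) over all H ∈ ℝ^{n×m}, i.e., J_{σ_w}(Yᵀ X⁻¹)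 ≤ J_{σ_w}(H) for all H ∈ ℝ^{n×m}. -/
/-!
Up to a constant, the jittering risk is the quadratic `J H = tr (H X Hᵀ) - 2 tr (H Y)` in `H`,
with `X` the (positive definite) covariance of the jittered measurements. Since `K = Yᵀ X⁻¹`
solves the normal equation `X Kᵀ = Y`, completing the square gives
`J H - J K = tr ((H - K) X (H - K)ᵀ) ≥ 0`.
-/

open Matrix

namespace Matrix

variable {ι κ : Type*} [Fintype κ]

section CommRing

variable {R : Type*} [CommRing R]

theorem mul_transpose_mul_nonsing_inv_transpose [DecidableEq κ] {X : Matrix κ κ R}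
    (hX : Xᵀ = X) (hdet : IsUnit X.det) (Y : Matrix κ ι R) : X * (Yᵀ * X⁻¹)ᵀ = Y := by
  rw [transpose_mul, transpose_nonsing_inv, hX, transpose_transpose, ← Matrix.mul_assoc,
    mul_nonsing_inv _ hdet, Matrix.one_mul]

variable [Fintype ι]

theorem trace_mul_mul_transpose_sub_two_mul_trace_eq {X : Matrix κ κ R} (hX : Xᵀ = X)
    {K : Matrix ι κ R} {Y : Matrix κ ι R} (hKY : X * Kᵀ = Y) (H : Matrix ι κ R) :
    (H * X * Hᵀ).trace - 2 * (H * Y).trace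
      = ((H - K) * X * (H - K)ᵀ).trace - (K * X * Kᵀ).trace := by
  have hHK : (H * X * Kᵀ).trace = (H * Y).trace := by rw [Matrix.mul_assoc, hKY]
  have hKH : (K * X * Hᵀ).trace = (H * Y).trace := by
    rw [← trace_transpose, transpose_mul, transpose_mul, transpose_transpose, hX, hKY]
  simp only [transpose_sub, Matrix.sub_mul, Matrix.mul_sub, trace_sub, hHK, hKH]
  ring

theorem trace_mul_sub_one_mul_mul_sub_one_transpose [DecidableEq ι] [DecidableEq κ]
    (A : Matrix κ ι R) {P : Matrix ι ι R} (hP : Pᵀ = P) (H : Matrix ι κ R) (a b : R) :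
    a * ((H * A - 1) * P * (H * A - 1)ᵀ).trace + b * (H * Hᵀ).trace
      = (H * (a • (A * P * Aᵀ) + b • 1) * Hᵀ).trace - 2 * (H * (a • (A * P))).trace
        + a * P.trace := by
  have hPAH : (P * (Aᵀ * Hᵀ)).trace = (H * (A * P)).trace := by
    rw [← trace_transpose, transpose_mul, transpose_mul, transpose_transpose, transpose_transpose,
      hP, Matrix.mul_assoc]
  simp only [transpose_sub, transpose_mul, transpose_one, Matrix.sub_mul, Matrix.mul_sub,
    Matrix.mul_add, Matrix.add_mul, Matrix.one_mul, Matrix.mul_one, Matrix.mul_smul,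
    Matrix.smul_mul, trace_sub, trace_add, trace_smul, smul_eq_mul, Matrix.mul_assoc, hPAH]
  ring

end CommRing

variable [Fintype ι]

theorem posDef_smul_mul_transpose_add_smul_one [DecidableEq κ] (B : Matrix κ ι ℝ) {a b : ℝ}
    (ha : 0 ≤ a) (hb : 0 < b) : (a • (B * Bᵀ) + b • 1).PosDef :=
  PosDef.posSemidef_add ((posSemidef_self_mul_conjTranspose B).smul ha) (PosDef.one.smul hb)

theorem trace_mul_mul_transpose_sub_two_mul_trace_le {X : Matrix κ κ ℝ} (hX : X.PosSemidef)
    {K : Matrix ι κ ℝ} {Y : Matrix κ ι ℝ} (hKY : X * Kᵀ = Y) (H : Matrix ι κ ℝ) :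
    (K * X * Kᵀ).trace - 2 * (K * Y).trace ≤ (H * X * Hᵀ).trace - 2 * (H * Y).trace := by
  have hXsymm : Xᵀ = X := hX.isHermitian.eq
  have hrem : 0 ≤ ((H - K) * X * (H - K)ᵀ).trace :=
    (hX.mul_mul_conjTranspose_same (H - K)).trace_nonneg
  rw [trace_mul_mul_transpose_sub_two_mul_trace_eq hXsymm hKY H,
    trace_mul_mul_transpose_sub_two_mul_trace_eq hXsymm hKY K, sub_self, Matrix.zero_mul,
    Matrix.zero_mul, trace_zero]
  linarith

end Matrix

theorem stmt14_general (m n d : ℕ)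
    (A : Matrix (Fin m) (Fin n) ℝ) (U : Matrix (Fin n) (Fin d) ℝ)
    (σc σz σw : ℝ)
    (hpos : 0 < σw ^ 2 + σz ^ 2 / m) :
    let X : Matrix (Fin m) (Fin m) ℝ :=
      (σc ^ 2 / d) • (A * U * (A * U)ᵀ) + (σw ^ 2 + σz ^ 2 / m) • 1
    let Y : Matrix (Fin m) (Fin n) ℝ := (σc ^ 2 / d) • (A * U * Uᵀ)
    let J : Matrix (Fin n) (Fin m) ℝ → ℝ := fun H =>
      σc ^ 2 / d * ((H * A - 1) * (U * Uᵀ) * (H * A - 1)ᵀ).trace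
        + (σz ^ 2 / m + σw ^ 2) * (H * Hᵀ).trace
    X.PosDef ∧ ∀ H : Matrix (Fin n) (Fin m) ℝ, J (Yᵀ * X⁻¹) ≤ J H := by
  intro X Y J
  have hX : X.PosDef := posDef_smul_mul_transpose_add_smul_one (A * U) (by positivity) hpos
  have hJ : ∀ H, J H = (H * X * Hᵀ).trace - 2 * (H * Y).trace + σc ^ 2 / d * (U * Uᵀ).trace := by
    intro H
    have hUUt : (U * Uᵀ)ᵀ = U * Uᵀ := by rw [transpose_mul, transpose_transpose]
    simp only [J, add_comm (σz ^ 2 / m), trace_mul_sub_one_mul_mul_sub_one_transpose A hUUt H]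
    simp only [X, Y, transpose_mul, Matrix.mul_assoc]
  have hKY : X * (Yᵀ * X⁻¹)ᵀ = Y :=
    mul_transpose_mul_nonsing_inv_transpose hX.isHermitian.eq hX.det_pos.ne'.isUnit Y
  refine ⟨hX, fun H => ?_⟩
  rw [hJ, hJ]
  gcongr ?_ + _
  exact trace_mul_mul_transpose_sub_two_mul_trace_le hX.posSemidef hKY H

/-- The optimal jittering estimator for general linear inverse problems: with
`X = (σ_c²/d) A U (A U)ᵀ + (σ_w² + σ_z²/m) I` and `Y = (σ_c²/d) A U Uᵀ`, the matrix `X` is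
positive definite and `H* = Yᵀ X⁻¹` minimizes the jittering risk. -/
theorem stmt14 (m n d : ℕ) (hm : 0 < m) (hn : 0 < n) (hd : 0 < d)
    (A : Matrix (Fin m) (Fin n) ℝ) (U : Matrix (Fin n) (Fin d) ℝ) (hU : Uᵀ * U = 1)
    (σc σz σw : ℝ) (hσc : 0 < σc) (hσz : 0 ≤ σz) (hσw : 0 ≤ σw)
    (hpos : 0 < σw ^ 2 + σz ^ 2 / m) :
    let X : Matrix (Fin m) (Fin m) ℝ :=
      (σc ^ 2 / d) • (A * U * (A * U)ᵀ) + (σw ^ 2 + σz ^ 2 / m) • 1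
    let Y : Matrix (Fin m) (Fin n) ℝ := (σc ^ 2 / d) • (A * U * Uᵀ)
    let J : Matrix (Fin n) (Fin m) ℝ → ℝ := fun H =>
      σc ^ 2 / d * ((H * A - 1) * (U * Uᵀ) * (H * A - 1)ᵀ).trace
        + (σz ^ 2 / m + σw ^ 2) * (H * Hᵀ).trace
    X.PosDef ∧ ∀ H : Matrix (Fin n) (Fin m) ℝ, J (Yᵀ * X⁻¹) ≤ J H :=
  stmt14_general m n d A U σc σz σw hpos
end

section
/- Let U ∈ ℝ^{n×d} have orthonormal columns, let σ_c > 0, σ_z ≥ 0, σ_w ≥ 0 with σ_w² + σ_z²/n > 0, and consider the denoising case A = I_n (so m = n). Then the estimator H* = α_J · U Uᵀ with α_J = σ_c² / (σ_c² + σ_z² (d/n) + σ_w² d) minimizes the jittering risk J_{σ_w}(H) = (σ_c²/d) tr((H − I) U Uᵀ (H − I)ᵀ) + (σ_z²/n + σ_w²) tr(H Hᵀ) over all H ∈ ℝ^{n×n}. -/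
open Matrix

lemma aux_trace_nonneg15 {k l : ℕ} (A : Matrix (Fin k) (Fin l) ℝ) :
    0 ≤ (A * Aᵀ).trace := by
  classical
  refine Finset.sum_nonneg fun i _ => ?_
  simp only [Matrix.diag_apply, Matrix.mul_apply, Matrix.transpose_apply]
  exact Finset.sum_nonneg fun j _ => mul_self_nonneg _

/-- The optimal jittering estimator for subspace denoising (`A = I`, `m = n`) is the shrunken
subspace projection `H* = α_J U Uᵀ` with `α_J = σ_c² / (σ_c² + σ_z² (d/n) + σ_w² d)`. -/
theorem stmt15 (n d : ℕ) (hn : 0 < n) (hd : 0 < d)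
    (U : Matrix (Fin n) (Fin d) ℝ) (hU : Uᵀ * U = 1)
    (σc σz σw : ℝ) (hσc : 0 < σc) (hσz : 0 ≤ σz) (hσw : 0 ≤ σw)
    (hpos : 0 < σw ^ 2 + σz ^ 2 / n) :
    let αJ : ℝ := σc ^ 2 / (σc ^ 2 + σz ^ 2 * ((d : ℝ) / n) + σw ^ 2 * d)
    let J : Matrix (Fin n) (Fin n) ℝ → ℝ := fun H =>
      σc ^ 2 / d * ((H - 1) * (U * Uᵀ) * (H - 1)ᵀ).trace
        + (σz ^ 2 / n + σw ^ 2) * (H * Hᵀ).trace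
    ∀ H : Matrix (Fin n) (Fin n) ℝ, J (αJ • (U * Uᵀ)) ≤ J H := by
  intro αJ J H
  simp only [J]
  set P : Matrix (Fin n) (Fin n) ℝ := U * Uᵀ with hPdef
  have hdr : (0:ℝ) < d := by exact_mod_cast hd
  have hnr : (0:ℝ) < n := by exact_mod_cast hn
  have hden : 0 < σc ^ 2 + σz ^ 2 * ((d : ℝ) / n) + σw ^ 2 * d := by positivity
  have hPt : Pᵀ = P := by rw [hPdef, transpose_mul, transpose_transpose]
  have hPP : P * P = P := by
    rw [hPdef, Matrix.mul_assoc, ← Matrix.mul_assoc Uᵀ, hU, Matrix.one_mul]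
  set a : ℝ := σc ^ 2 / d with ha
  set b : ℝ := σz ^ 2 / n + σw ^ 2 with hb
  have ha0 : 0 < a := by rw [ha]; positivity
  have hb0 : 0 < b := by rw [hb]; linarith [hpos]
  set Q : Matrix (Fin n) (Fin n) ℝ := αJ • P - 1 with hQ
  have hQt : Qᵀ = Q := by rw [hQ, transpose_sub, transpose_smul, hPt, transpose_one]
  have hPQ : P * Q = (αJ - 1) • P := by
    rw [hQ, Matrix.mul_sub, Matrix.mul_smul, hPP, Matrix.mul_one, sub_smul, one_smul]
  have hQP : Q * P = (αJ - 1) • P := by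
    rw [hQ, Matrix.sub_mul, Matrix.smul_mul, hPP, Matrix.one_mul, sub_smul, one_smul]
  have htr_tp : ∀ X : Matrix (Fin n) (Fin n) ℝ, (P * Xᵀ).trace = (X * P).trace := by
    intro X
    rw [← Matrix.trace_transpose (P * Xᵀ), transpose_mul, transpose_transpose, hPt]
  have h1 : ∀ K : Matrix (Fin n) (Fin n) ℝ,
      ((K - 1) * P * (K - 1)ᵀ).trace
        = ((K - αJ • P) * P * (K - αJ • P)ᵀ).trace
          + 2 * (αJ - 1) * ((K - αJ • P) * P).trace + (αJ - 1) ^ 2 * P.trace := by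
    intro K
    set E := K - αJ • P with hE
    have hKsplit : K - 1 = E + Q := by rw [hE, hQ]; abel
    have e1 : (E * P * Q).trace = (αJ - 1) * (E * P).trace := by
      rw [Matrix.mul_assoc, hPQ, Matrix.mul_smul, Matrix.trace_smul, smul_eq_mul,
        ← Matrix.mul_assoc]
    have e2 : (Q * P * Eᵀ).trace = (αJ - 1) * (E * P).trace := by
      rw [hQP, Matrix.smul_mul, Matrix.trace_smul, smul_eq_mul, htr_tp]
    have e3 : (Q * P * Q).trace = (αJ - 1) ^ 2 * P.trace := by
      rw [hQP, Matrix.smul_mul, hPQ, smul_smul, Matrix.trace_smul, smul_eq_mul]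
      ring
    rw [hKsplit, transpose_add, hQt]
    simp only [Matrix.add_mul, Matrix.mul_add, Matrix.trace_add]
    rw [e1, e2, e3]
    ring
  have h2 : ∀ K : Matrix (Fin n) (Fin n) ℝ,
      (K * Kᵀ).trace
        = ((K - αJ • P) * (K - αJ • P)ᵀ).trace
          + 2 * αJ * ((K - αJ • P) * P).trace + αJ ^ 2 * P.trace := by
    intro K
    set E := K - αJ • P with hE
    have hKsplit : K = E + αJ • P := by rw [hE]; abel
    have e1 : (E * (αJ • P)).trace = αJ * (E * P).trace := by
      rw [Matrix.mul_smul, Matrix.trace_smul, smul_eq_mul]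
    have e2 : ((αJ • P) * Eᵀ).trace = αJ * (E * P).trace := by
      rw [Matrix.smul_mul, Matrix.trace_smul, smul_eq_mul, htr_tp]
    have e3 : ((αJ • P) * (αJ • P)).trace = αJ ^ 2 * P.trace := by
      rw [Matrix.smul_mul, Matrix.mul_smul, hPP, smul_smul, Matrix.trace_smul, smul_eq_mul]
      ring
    have hKt : Kᵀ = Eᵀ + αJ • P := by
      rw [hKsplit, transpose_add, transpose_smul, hPt]
    rw [hKt]
    nth_rewrite 1 [hKsplit]
    simp only [Matrix.add_mul, Matrix.mul_add, Matrix.trace_add]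
    rw [e1, e2, e3]
    ring
  rw [h1 H, h2 H, h1 (αJ • P), h2 (αJ • P)]
  have hz : αJ • P - αJ • P = (0 : Matrix (Fin n) (Fin n) ℝ) := sub_self _
  rw [hz]
  simp only [Matrix.zero_mul, Matrix.trace_zero, mul_zero, zero_add, add_zero]
  set D : Matrix (Fin n) (Fin n) ℝ := H - αJ • P with hD
  have hX : 0 ≤ (D * P * Dᵀ).trace := by
    have : D * P * Dᵀ = (D * U) * (D * U)ᵀ := by
      rw [hPdef, transpose_mul, ← Matrix.mul_assoc, Matrix.mul_assoc (D * U)]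
    rw [this]
    exact aux_trace_nonneg15 _
  have hY : 0 ≤ (D * Dᵀ).trace := aux_trace_nonneg15 _
  have hcoef : a * (αJ - 1) + b * αJ = 0 := by
    rw [ha, hb]
    show σc ^ 2 / d * (σc ^ 2 / (σc ^ 2 + σz ^ 2 * ((d : ℝ) / n) + σw ^ 2 * d) - 1)
      + (σz ^ 2 / n + σw ^ 2) * (σc ^ 2 / (σc ^ 2 + σz ^ 2 * ((d : ℝ) / n) + σw ^ 2 * d)) = 0
    field_simp
    ring
  set Z : ℝ := (D * P).trace with hZ
  have hZero : 2 * (a * (αJ - 1) + b * αJ) * Z = 0 := by rw [hcoef]; ring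
  nlinarith [mul_nonneg ha0.le hX, mul_nonneg hb0.le hY]
end

section
/- Let σ_c > 0, σ_z ≥ 0, let d, n be positive integers, and let 0 ≤ ε < σ_c. Define σ_w(ε)² = ( ε² σ_z² (d/n) + σ_z √(d/n) σ_c ε √(σ_c² − ε² + σ_z² (d/n)) ) / ( d (σ_c² − ε²) ). Then σ_c² / ( σ_c² + σ_z² (d/n) + σ_w(ε)² d ) = ( σ_c² − ε σ_c σ_z √(d/n) / √(σ_c² + σ_z² (d/n) − ε²) ) / ( σ_c² + σ_z² (d/n) ), i.e., the optimal jittering shrinkage factor α_J at jittering level σ_w(ε) equals the optimal worst-case shrinkage factor α(ε) of Theorem 1. -/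
/-! Write `t = σ_z √(d/n)` and `s = √(σ_c² − ε² + t²)`. The denominator of `α_J` factors as
`σ_c s (σ_c s + ε t) / (σ_c² − ε²)`, because `(σ_c² − ε²)(σ_c² + t²) + ε² t² = σ_c² s²`; the claim
then reduces to `(σ_c s + ε t)(σ_c s − ε t) = (σ_c² − ε²)(σ_c² + t²)`, the same identity again. -/

lemma jitter_denominator_eq {c t ε s : ℝ} (hs : s ^ 2 = c ^ 2 - ε ^ 2 + t ^ 2)
    (hεc : c ^ 2 - ε ^ 2 ≠ 0) :
    c ^ 2 + t ^ 2 + (ε ^ 2 * t ^ 2 + t * c * ε * s) / (c ^ 2 - ε ^ 2)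
      = c * s * (c * s + ε * t) / (c ^ 2 - ε ^ 2) := by
  field_simp
  linear_combination (-c ^ 2) * hs

lemma jitter_shrinkage_eq_robust_shrinkage {c t ε s : ℝ} (hc : 0 < c) (ht : 0 ≤ t)
    (hε : 0 ≤ ε) (hεc : ε < c) (hs0 : 0 < s) (hs : s ^ 2 = c ^ 2 - ε ^ 2 + t ^ 2) :
    c ^ 2 / (c ^ 2 + t ^ 2 + (ε ^ 2 * t ^ 2 + t * c * ε * s) / (c ^ 2 - ε ^ 2))
      = (c ^ 2 - ε * c * t / s) / (c ^ 2 + t ^ 2) := by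
  have hA : 0 < c ^ 2 - ε ^ 2 := by nlinarith
  rw [jitter_denominator_eq hs hA.ne', div_div_eq_mul_div, div_eq_div_iff (by positivity) (by positivity)]
  field_simp
  linear_combination (-c ^ 2) * hs

theorem stmt16_general (σc σz ε : ℝ) (d n : ℕ) (hσc : 0 < σc) (hσz : 0 ≤ σz)
    (hd : 0 < d) (hε0 : 0 ≤ ε) (hεc : ε < σc) :
    let σw2 : ℝ :=
      (ε ^ 2 * σz ^ 2 * ((d : ℝ) / n)
          + σz * Real.sqrt ((d : ℝ) / n) * σc * ε
            * Real.sqrt (σc ^ 2 - ε ^ 2 + σz ^ 2 * ((d : ℝ) / n)))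
        / ((d : ℝ) * (σc ^ 2 - ε ^ 2))
    σc ^ 2 / (σc ^ 2 + σz ^ 2 * ((d : ℝ) / n) + σw2 * d)
      = (σc ^ 2 - ε * σc * σz * Real.sqrt ((d : ℝ) / n)
            / Real.sqrt (σc ^ 2 + σz ^ 2 * ((d : ℝ) / n) - ε ^ 2))
          / (σc ^ 2 + σz ^ 2 * ((d : ℝ) / n)) := by
  intro σw2
  set t := σz * Real.sqrt ((d : ℝ) / n)
  have ht2 : σz ^ 2 * ((d : ℝ) / n) = t ^ 2 := by
    rw [mul_pow, Real.sq_sqrt (by positivity)]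
  set s := Real.sqrt (σc ^ 2 - ε ^ 2 + t ^ 2)
  have hs_arg : 0 < σc ^ 2 - ε ^ 2 + t ^ 2 := by nlinarith
  have hs0 : 0 < s := Real.sqrt_pos.2 hs_arg
  have hs : s ^ 2 = σc ^ 2 - ε ^ 2 + t ^ 2 := Real.sq_sqrt hs_arg.le
  have hσw2 : σw2 * d = (ε ^ 2 * t ^ 2 + t * σc * ε * s) / (σc ^ 2 - ε ^ 2) := by
    simp only [σw2, ht2]
    rw [div_mul_eq_mul_div, mul_comm _ (d : ℝ), mul_div_mul_left _ _ (by positivity),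
      mul_assoc (ε ^ 2), ht2]
  have hsqrt : Real.sqrt (σc ^ 2 + t ^ 2 - ε ^ 2) = s := by
    congr 1; ring
  rw [hσw2, ht2, hsqrt, mul_assoc (ε * σc),
    jitter_shrinkage_eq_robust_shrinkage hσc (by positivity) hε0 hεc hs0 hs]

/-- Corollary 1: with the jittering level `σ_w(ε)` chosen as stated, the optimal jittering
shrinkage factor `α_J = σ_c²/(σ_c² + σ_z² (d/n) + σ_w(ε)² d)` equals the optimal worst-case
shrinkage factor `α(ε)` of Theorem 1. -/
theorem stmt16 (σc σz ε : ℝ) (d n : ℕ) (hσc : 0 < σc) (hσz : 0 ≤ σz)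
    (hd : 0 < d) (hn : 0 < n) (hε0 : 0 ≤ ε) (hεc : ε < σc) :
    let σw2 : ℝ :=
      (ε ^ 2 * σz ^ 2 * ((d : ℝ) / n)
          + σz * Real.sqrt ((d : ℝ) / n) * σc * ε
            * Real.sqrt (σc ^ 2 - ε ^ 2 + σz ^ 2 * ((d : ℝ) / n)))
        / ((d : ℝ) * (σc ^ 2 - ε ^ 2))
    σc ^ 2 / (σc ^ 2 + σz ^ 2 * ((d : ℝ) / n) + σw2 * d)
      = (σc ^ 2 - ε * σc * σz * Real.sqrt ((d : ℝ) / n)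
            / Real.sqrt (σc ^ 2 + σz ^ 2 * ((d : ℝ) / n) - ε ^ 2))
          / (σc ^ 2 + σz ^ 2 * ((d : ℝ) / n)) :=
  stmt16_general σc σz ε d n hσc hσz hd hε0 hεc
end

section
/- The functions φ₁(x, z) = x² / (1 − (x − 1)²/z) and φ₂(x, z) = (x − 1)² / (1 − (x − 1)²/z) are jointly convex on the set D = { (x, z) ∈ ℝ² : z > 0 and (x − 1)² < z }. -/
/-- Quadratic-over-linear convexity inequality. -/
lemma key_sq_div (a₁ a₂ b₁ b₂ t s : ℝ) (hb₁ : 0 < b₁) (hb₂ : 0 < b₂)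
    (ht : 0 ≤ t) (hs : 0 ≤ s) (hts : t + s = 1) :
    (t * a₁ + s * a₂) ^ 2 / (t * b₁ + s * b₂) ≤ t * (a₁ ^ 2 / b₁) + s * (a₂ ^ 2 / b₂) := by
  have hb : 0 < t * b₁ + s * b₂ := by
    rcases eq_or_lt_of_le ht with rfl | ht'
    · have hs1 : s = 1 := by linarith
      simpa [hs1] using hb₂
    · nlinarith [mul_pos ht' hb₁, mul_nonneg hs hb₂.le]
  rw [div_le_iff₀ hb]
  have huv : 2 * (a₁ * a₂) ≤ (a₁ ^ 2 / b₁) * b₂ + (a₂ ^ 2 / b₂) * b₁ := by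
    rw [div_mul_eq_mul_div, div_mul_eq_mul_div, div_add_div _ _ hb₁.ne' hb₂.ne',
      le_div_iff₀ (mul_pos hb₁ hb₂)]
    nlinarith [sq_nonneg (a₁ * b₂ - a₂ * b₁)]
  have e : (t * (a₁ ^ 2 / b₁) + s * (a₂ ^ 2 / b₂)) * (t * b₁ + s * b₂)
      = t ^ 2 * a₁ ^ 2 + t * s * ((a₁ ^ 2 / b₁) * b₂ + (a₂ ^ 2 / b₂) * b₁) + s ^ 2 * a₂ ^ 2 := by
    field_simp
    ring
  rw [e]
  nlinarith [mul_le_mul_of_nonneg_left huv (mul_nonneg ht hs)]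

/-- Main auxiliary lemma: convexity of `(x - c)² / (1 - (x-1)²/z)` on `D`. -/
lemma aux_convex (c : ℝ) :
    ConvexOn ℝ {p : ℝ × ℝ | 0 < p.2 ∧ (p.1 - 1) ^ 2 < p.2}
      (fun p : ℝ × ℝ => (p.1 - c) ^ 2 / (1 - (p.1 - 1) ^ 2 / p.2)) := by
  constructor
  · -- Convexity of D
    intro p hp q hq t s ht hs hts
    obtain ⟨hp2, hp1⟩ := hp
    obtain ⟨hq2, hq1⟩ := hq
    have h2 : (0:ℝ) < t * p.2 + s * q.2 := by
      rcases eq_or_lt_of_le ht with rfl | ht'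
      · have hs1 : s = 1 := by linarith
        simpa [hs1] using hq2
      · nlinarith [mul_pos ht' hp2, mul_nonneg hs hq2.le]
    refine ⟨by simpa using h2, ?_⟩
    have hx : t * p.1 + s * q.1 - 1 = t * (p.1 - 1) + s * (q.1 - 1) := by
      linear_combination hts
    have hsq : (t * p.1 + s * q.1 - 1) ^ 2 ≤ t * (p.1 - 1) ^ 2 + s * (q.1 - 1) ^ 2 := by
      rw [hx]
      have hs' : s = 1 - t := by linarith
      subst hs'
      nlinarith [mul_nonneg (mul_nonneg ht (by linarith : (0:ℝ) ≤ 1 - t))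
        (sq_nonneg (p.1 - q.1))]
    have hlt : t * (p.1 - 1) ^ 2 + s * (q.1 - 1) ^ 2 < t * p.2 + s * q.2 := by
      rcases eq_or_lt_of_le ht with rfl | ht'
      · have hs1 : s = 1 := by linarith
        simp only [hs1, zero_mul, one_mul, zero_add]
        linarith
      · nlinarith [mul_lt_mul_of_pos_left hp1 ht', mul_le_mul_of_nonneg_left hq1.le hs]
    show ((t • p + s • q).1 - 1) ^ 2 < (t • p + s • q).2
    simp only [Prod.fst_add, Prod.snd_add, Prod.smul_fst, Prod.smul_snd, smul_eq_mul]
    linarith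
  · intro p hp q hq t s ht hs hts
    obtain ⟨hp2, hp1⟩ := hp
    obtain ⟨hq2, hq1⟩ := hq
    set dp : ℝ := 1 - (p.1 - 1) ^ 2 / p.2 with hdp_def
    set dq : ℝ := 1 - (q.1 - 1) ^ 2 / q.2 with hdq_def
    have hdp : 0 < dp := by
      have : (p.1 - 1) ^ 2 / p.2 < 1 := (div_lt_one hp2).2 hp1
      simp only [hdp_def]; linarith
    have hdq : 0 < dq := by
      have : (q.1 - 1) ^ 2 / q.2 < 1 := (div_lt_one hq2).2 hq1
      simp only [hdq_def]; linarith
    simp only [Prod.fst_add, Prod.snd_add, Prod.smul_fst, Prod.smul_snd, smul_eq_mul]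
    have h2 : (0:ℝ) < t * p.2 + s * q.2 := by
      rcases eq_or_lt_of_le ht with rfl | ht'
      · have hs1 : s = 1 := by linarith
        simpa [hs1] using hq2
      · nlinarith [mul_pos ht' hp2, mul_nonneg hs hq2.le]
    have hd2 : (0:ℝ) < t * dp + s * dq := by
      rcases eq_or_lt_of_le ht with rfl | ht'
      · have hs1 : s = 1 := by linarith
        simpa [hs1] using hdq
      · nlinarith [mul_pos ht' hdp, mul_nonneg hs hdq.le]
    -- Step A: concavity of the denominator
    have hA : t * dp + s * dq ≤ 1 - (t * p.1 + s * q.1 - 1) ^ 2 / (t * p.2 + s * q.2) := by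
      have h := key_sq_div (p.1 - 1) (q.1 - 1) p.2 q.2 t s hp2 hq2 ht hs hts
      have hx : t * p.1 + s * q.1 - 1 = t * (p.1 - 1) + s * (q.1 - 1) := by
        linear_combination hts
      rw [hx]
      simp only [hdp_def, hdq_def]
      have h1 : t * (1 - (p.1 - 1) ^ 2 / p.2) + s * (1 - (q.1 - 1) ^ 2 / q.2)
          = 1 - (t * ((p.1 - 1) ^ 2 / p.2) + s * ((q.1 - 1) ^ 2 / q.2)) := by
        linear_combination hts
      rw [h1]
      linarith
    have hdr : 0 < 1 - (t * p.1 + s * q.1 - 1) ^ 2 / (t * p.2 + s * q.2) :=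
      lt_of_lt_of_le hd2 hA
    -- Step B: monotonicity of a²/b in b
    have hB : (t * p.1 + s * q.1 - c) ^ 2 / (1 - (t * p.1 + s * q.1 - 1) ^ 2 / (t * p.2 + s * q.2))
        ≤ (t * p.1 + s * q.1 - c) ^ 2 / (t * dp + s * dq) :=
      div_le_div_of_nonneg_left (sq_nonneg _) hd2 hA
    -- Step C: quadratic-over-linear convexity
    have hC : (t * p.1 + s * q.1 - c) ^ 2 / (t * dp + s * dq)
        ≤ t * ((p.1 - c) ^ 2 / dp) + s * ((q.1 - c) ^ 2 / dq) := by
      have hx : t * p.1 + s * q.1 - c = t * (p.1 - c) + s * (q.1 - c) := by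
        linear_combination c * hts
      rw [hx]
      exact key_sq_div (p.1 - c) (q.1 - c) dp dq t s hdp hdq ht hs hts
    calc (t * p.1 + s * q.1 - c) ^ 2 / (1 - (t * p.1 + s * q.1 - 1) ^ 2 / (t * p.2 + s * q.2))
        ≤ (t * p.1 + s * q.1 - c) ^ 2 / (t * dp + s * dq) := hB
      _ ≤ t * ((p.1 - c) ^ 2 / dp) + s * ((q.1 - c) ^ 2 / dq) := hC
      _ = t • ((p.1 - c) ^ 2 / (1 - (p.1 - 1) ^ 2 / p.2))
          + s • ((q.1 - c) ^ 2 / (1 - (q.1 - 1) ^ 2 / q.2)) := by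
        simp [hdp_def, hdq_def, smul_eq_mul]

/-- The functions `φ₁(x,z) = x²/(1 - (x-1)²/z)` and `φ₂(x,z) = (x-1)²/(1 - (x-1)²/z)` are jointly
convex on `D = {(x,z) : z > 0 ∧ (x-1)² < z}`. -/
theorem stmt19 :
    let D : Set (ℝ × ℝ) := {p | 0 < p.2 ∧ (p.1 - 1) ^ 2 < p.2}
    ConvexOn ℝ D (fun p : ℝ × ℝ => p.1 ^ 2 / (1 - (p.1 - 1) ^ 2 / p.2)) ∧
      ConvexOn ℝ D (fun p : ℝ × ℝ => (p.1 - 1) ^ 2 / (1 - (p.1 - 1) ^ 2 / p.2)) := by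
  intro D
  constructor
  · have h := aux_convex 0
    simpa using h
  · exact aux_convex 1
end
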